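/- arXiv:1311.2648 — 5 statements merged into one kernel-verified Lean document; each statement's English description precedes it below -/
import Mathlib

section
/- Let G be an abelian group, X an infinite subset of G, and κ a regular infinite cardinal with κ ≤ card(X). Then the co-κ filter on X is self-indulgent as a family of subsets of G. -/
open Pointwise

universe u

/-- `S* = S ∪ {0} ∪ (-S)`. -/
def Sstar {G : Type u} [AddCommGroup G] (S : Set G) : Set G := S ∪ {0} ∪ (-S)

/-- `F'` is a downward cofinal subset of `F` (ordered by inclusion). -/
def DownCofinal {G : Type u} [AddCommGroup G] (F' F : Set (Set G)) : Prop :=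
  F' ⊆ F ∧ ∀ S ∈ F, ∃ T ∈ F', T ⊆ S

/-- The family `(x T)_{T ∈ F''}`, indexed by `F''` ordered (downward) by inclusion,
converges strongly to `a` with respect to `F`: for every `S ∈ F` there is an index
`T ∈ F''` such that `x T' - a ∈ S*` for every index `T' ∈ F''` with `T' ⊆ T`. -/
def ConvStrong {G : Type u} [AddCommGroup G] (F F'' : Set (Set G)) (x : Set G → G)
    (a : G) : Prop :=
  ∀ S ∈ F, ∃ T ∈ F'', ∀ T' ∈ F'', T' ⊆ T → x T' - a ∈ Sstar S

/-- `F` is self-indulgent: for every `S ∈ F` and every family `(x T)_{T ∈ F'}` of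
elements of `S*` indexed by a downward cofinal subset `F' ⊆ F`, there exist `a ∈ S*`
and a downward cofinal subset `F'' ⊆ F'` such that `(x T)_{T ∈ F''}` converges
strongly to `a` with respect to `F`. -/
def SelfIndulgent {G : Type u} [AddCommGroup G] (F : Set (Set G)) : Prop :=
  ∀ S ∈ F, ∀ F' : Set (Set G), DownCofinal F' F →
    ∀ x : Set G → G, (∀ T ∈ F', x T ∈ Sstar S) →
      ∃ a ∈ Sstar S, ∃ F'' : Set (Set G), DownCofinal F'' F' ∧ ConvStrong F F'' x a
/-!
Let `(x T)_{T ∈ F'}` take values in `S*`. If some value `a` is taken cofinally often, the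
indices where `x T = a` form a cofinal subfamily on which the family is constant. Otherwise
every `b` has an index `W b ∈ F'` below which `x` avoids `b`. Given `U` in the co-`κ` filter,
the set `S* \ U*` of bad values has fewer than `κ` elements, so by regularity of `κ` the
`W b` for bad `b` have a common lower bound in the filter; below it `x` takes values in `U*`,
i.e. the whole family converges strongly to `0`.
-/

open Cardinal

section Sstar

variable {G : Type u} [AddCommGroup G]

theorem zero_mem_Sstar (S : Set G) : (0 : G) ∈ Sstar S := Or.inl (Or.inr rfl)

theorem Sstar_diff_Sstar_subset (S U : Set G) : Sstar S \ Sstar U ⊆ (S \ U) ∪ -(S \ U) := by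
  rintro b ⟨(hb | hb) | hb, hbU⟩
  · exact Or.inl ⟨hb, fun h => hbU (Or.inl (Or.inl h))⟩
  · exact absurd (hb ▸ zero_mem_Sstar U) hbU
  · exact Or.inr ⟨hb, fun h => hbU (Or.inr h)⟩

theorem mk_Sstar_diff_Sstar_lt {S U : Set G} {κ : Cardinal.{u}} (hκ : ℵ₀ ≤ κ)
    (h : #↥(S \ U) < κ) : #↥(Sstar S \ Sstar U) < κ :=
  calc #↥(Sstar S \ Sstar U)
      ≤ #↥((S \ U) ∪ -(S \ U)) := mk_le_mk_of_subset (Sstar_diff_Sstar_subset S U)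
    _ ≤ #↥(S \ U) + #↥(-(S \ U)) := mk_union_le _ _
    _ < κ := by rw [mk_neg]; exact add_lt_of_lt hκ h h

end Sstar

section CoSmall

variable {α : Type u}

/-- The co-`κ` filter on `X`. -/
def coSmall (X : Set α) (κ : Cardinal.{u}) : Set (Set α) :=
  {S | S ⊆ X ∧ #↥(X \ S) < κ}

theorem exists_coSmall_subset_sInter {X : Set α} {κ : Cardinal.{u}} (hreg : κ.IsRegular)
    {𝒲 : Set (Set α)} (h𝒲 : 𝒲 ⊆ coSmall X κ) (h𝒲κ : #𝒲 < κ) :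
    ∃ V ∈ coSmall X κ, V ⊆ ⋂₀ 𝒲 := by
  refine ⟨X ∩ ⋂₀ 𝒲, ⟨Set.inter_subset_left, ?_⟩, Set.inter_subset_right⟩
  simp only [Set.sdiff_self_inter, Set.sInter_eq_biInter, Set.sdiff_iInter]
  exact (card_biUnion_lt_iff_forall_of_isRegular hreg h𝒲κ).2 fun W hW => (h𝒲 hW).2

theorem mk_Sstar_diff_Sstar_lt_of_mem_coSmall {G : Type u} [AddCommGroup G] {X S U : Set G}
    {κ : Cardinal.{u}} (hκ : ℵ₀ ≤ κ) (hS : S ∈ coSmall X κ) (hU : U ∈ coSmall X κ) :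
    #↥(Sstar S \ Sstar U) < κ :=
  mk_Sstar_diff_Sstar_lt hκ <| (mk_le_mk_of_subset (Set.sdiff_subset_sdiff_left hS.1)).trans_lt hU.2

end CoSmall

section SelfIndulgent

variable {G : Type u} [AddCommGroup G] {F F' : Set (Set G)} {x : Set G → G}

theorem convStrong_of_eqOn {F'' : Set (Set G)} {a : G} (hne : F''.Nonempty)
    (hxa : ∀ T ∈ F'', x T = a) : ConvStrong F F'' x a := by
  obtain ⟨T₀, hT₀⟩ := hne
  refine fun U _ => ⟨T₀, hT₀, fun T hT _ => ?_⟩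
  rw [hxa T hT, sub_self]
  exact zero_mem_Sstar U

theorem downCofinal_sep_eq {a : G} (hfreq : ∀ S' ∈ F', ∃ T ∈ F', T ⊆ S' ∧ x T = a) :
    DownCofinal {T ∈ F' | x T = a} F' :=
  ⟨fun _ hT => hT.1, fun S' hS' =>
    let ⟨T, hT, hTS', hxT⟩ := hfreq S' hS'
    ⟨T, ⟨hT, hxT⟩, hTS'⟩⟩

theorem convStrong_zero_of_eventually_ne {κ : Cardinal.{u}} {S : Set G}
    (hdir : ∀ 𝒲 ⊆ F, #𝒲 < κ → ∃ V ∈ F, V ⊆ ⋂₀ 𝒲)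
    (hsmall : ∀ U ∈ F, #↥(Sstar S \ Sstar U) < κ) (hF' : DownCofinal F' F)
    (hx : ∀ T ∈ F', x T ∈ Sstar S) (hne : ∀ b, ∃ W ∈ F', ∀ T ∈ F', T ⊆ W → x T ≠ b) :
    ConvStrong F F' x 0 := by
  choose W hWF' hW using hne
  intro U hU
  set bad := Sstar S \ Sstar U
  obtain ⟨V, hV, hVW⟩ := hdir (W '' bad) (Set.image_subset_iff.2 fun b _ => hF'.1 (hWF' b))
    (mk_image_le.trans_lt (hsmall U hU))
  obtain ⟨T, hT, hTV⟩ := hF'.2 V hV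
  refine ⟨T, hT, fun T' hT' hT'T => ?_⟩
  rw [sub_zero]
  by_contra hxU
  have hbad : x T' ∈ bad := ⟨hx T' hT', hxU⟩
  exact hW (x T') T' hT' (hT'T.trans <| hTV.trans <| hVW.trans <|
    Set.sInter_subset_of_mem (Set.mem_image_of_mem W hbad)) rfl

theorem selfIndulgent_of_forall_exists_subset_sInter {κ : Cardinal.{u}}
    (hdir : ∀ 𝒲 ⊆ F, #𝒲 < κ → ∃ V ∈ F, V ⊆ ⋂₀ 𝒲)
    (hsmall : ∀ S ∈ F, ∀ U ∈ F, #↥(Sstar S \ Sstar U) < κ) : SelfIndulgent F := by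
  intro S hS F' hF' x hx
  by_cases hfreq : ∃ a, ∀ S' ∈ F', ∃ T ∈ F', T ⊆ S' ∧ x T = a
  · obtain ⟨a, ha⟩ := hfreq
    obtain ⟨S', hS', -⟩ := hF'.2 S hS
    obtain ⟨T₀, hT₀, -, hxT₀⟩ := ha S' hS'
    exact ⟨a, hxT₀ ▸ hx T₀ hT₀, _, downCofinal_sep_eq ha,
      convStrong_of_eqOn ⟨T₀, hT₀, hxT₀⟩ fun _ hT => hT.2⟩
  · push Not at hfreq
    refine ⟨0, zero_mem_Sstar S, F', ⟨subset_rfl, fun S' hS' => ⟨S', hS', subset_rfl⟩⟩, ?_⟩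
    exact convStrong_zero_of_eventually_ne hdir (hsmall S hS) hF' hx hfreq

end SelfIndulgent

theorem stmt1_general {G : Type u} [AddCommGroup G] (X : Set G)
    (κ : Cardinal.{u}) (hreg : κ.IsRegular) :
    SelfIndulgent {S : Set G | S ⊆ X ∧ Cardinal.mk ↥(X \ S) < κ} :=
  selfIndulgent_of_forall_exists_subset_sInter (fun _ => exists_coSmall_subset_sInter hreg)
    fun _ hS _ hU => mk_Sstar_diff_Sstar_lt_of_mem_coSmall hreg.aleph0_le hS hU

theorem stmt1 {G : Type u} [AddCommGroup G] (X : Set G) (hX : X.Infinite)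
    (κ : Cardinal.{u}) (hreg : κ.IsRegular) (hκ : κ ≤ Cardinal.mk X) :
    SelfIndulgent {S : Set G | S ⊆ X ∧ Cardinal.mk ↥(X \ S) < κ} :=
  stmt1_general X κ hreg
end

section
/- Let G be a group, T a (not necessarily Hausdorff) group topology on G, and S a neighborhood of the identity e under T. Then one can choose for each q ∈ ℚ a neighborhood S_q of e under T so that U((S_q)_{q∈ℚ}) ⊆ S. -/
open Pointwise Filter Topology Function

/-- `S* = S ∪ {e} ∪ S⁻¹`. -/
def SstarM {G : Type*} [Group G] (S : Set G) : Set G := S ∪ {1} ∪ S⁻¹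

/-- `U((S_q)_{q ∈ ℚ})`: the union, over all finite strictly increasing sequences
`q₀ < ⋯ < q_n` in `ℚ`, of the setwise products `S*_{q₀} ⋯ S*_{q_n}`. -/
def UQ {G : Type*} [Group G] (S : ℚ → Set G) : Set G :=
  ⋃ (n : ℕ) (q : Fin (n + 1) → ℚ) (_ : StrictMono q),
    (List.ofFn fun i => SstarM (S (q i))).prod

/-!
Take neighbourhoods `S = W₀ ⊇ W₁ ⊇ ⋯` of `1` with `W (n+1) ^ 3 ⊆ W n`, and give the rational `q`
the set `W (k + 1) ∩ W (k + 1)⁻¹`, where `k` is the code of `q` in an enumeration of `ℚ`. A product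
of sets `W n` with pairwise distinct indices `n > m`, in any order, lies in `W m`: split the product
at its smallest index `n₀`; both sides lie in `W n₀` by induction, so the whole product lies in
`W n₀ ^ 3 ⊆ W m`. The order of the rationals therefore plays no role, only their distinctness.
-/

section Monoid

variable {M : Type*} [Monoid M] {W : ℕ → Set M}

theorem mul_mul_subset_of_lt (h1 : ∀ n, (1 : M) ∈ W n)
    (h3 : ∀ n, W (n + 1) * W (n + 1) * W (n + 1) ⊆ W n) {m k : ℕ} (hmk : m < k) :
    W k * W k * W k ⊆ W m := by
  have hanti : Antitone W := antitone_nat_of_succ_le fun n x hx => by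
    simpa using h3 n (Set.mul_mem_mul (Set.mul_mem_mul (h1 _) (h1 _)) hx)
  obtain ⟨j, rfl⟩ := Nat.exists_eq_add_of_lt hmk
  exact (h3 (m + j)).trans (hanti (Nat.le_add_right m j))

theorem list_prod_map_subset_of_nodup (h1 : ∀ n, (1 : M) ∈ W n)
    (h3 : ∀ n, W (n + 1) * W (n + 1) * W (n + 1) ⊆ W n) (L : List ℕ) {m : ℕ} (hnd : L.Nodup)
    (hm : ∀ n ∈ L, m < n) : (L.map W).prod ⊆ W m := by
  induction hL : L.length using Nat.strong_induction_on generalizing L m with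
  | _ k ih =>
  by_cases hne : L = []
  · simpa [hne] using h1 m
  obtain ⟨n₀, hn₀L, hmin⟩ : ∃ n₀ ∈ L, ∀ n ∈ L, n₀ ≤ n :=
    ⟨L.min hne, List.min_mem hne, fun n hn => List.min_le_of_mem hn⟩
  obtain ⟨A, B, rfl⟩ := List.append_of_mem hn₀L
  obtain ⟨hAnd, ⟨hn₀B, hBnd⟩, hdisj⟩ := by
    simpa only [List.nodup_append, List.nodup_cons] using hnd
  have hn₀A : n₀ ∉ A := fun h => hdisj n₀ h n₀ List.mem_cons_self rfl
  have hA : ∀ n ∈ A, n₀ < n := fun n hn =>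
    (hmin n (by simp [hn])).lt_of_ne fun h => hn₀A (h ▸ hn)
  have hB : ∀ n ∈ B, n₀ < n := fun n hn =>
    (hmin n (by simp [hn])).lt_of_ne fun h => hn₀B (h ▸ hn)
  have hAW := ih A.length (by simp [← hL]) A hAnd hA rfl
  have hBW := ih B.length (by simp [← hL]; omega) B hBnd hB rfl
  calc ((A ++ n₀ :: B).map W).prod = (A.map W).prod * W n₀ * (B.map W).prod := by
        simp [mul_assoc]
    _ ⊆ W n₀ * W n₀ * W n₀ := by gcongr
    _ ⊆ W m := mul_mul_subset_of_lt h1 h3 (hm n₀ hn₀L)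

variable [TopologicalSpace M] [ContinuousMul M] {U : Set M}

theorem exists_nhds_one_mul_mul_subset (hU : U ∈ 𝓝 1) : ∃ V ∈ 𝓝 (1 : M), V * V * V ⊆ U := by
  obtain ⟨V, hV, hVU⟩ := exists_nhds_one_split4 hU
  refine ⟨V, hV, ?_⟩
  rintro _ ⟨_, ⟨a, ha, b, hb, rfl⟩, c, hc, rfl⟩
  simpa using hVU ha hb hc (mem_of_mem_nhds hV)

theorem exists_seq_nhds_one_mul_mul_subset (hU : U ∈ 𝓝 1) :
    ∃ W : ℕ → Set M, W 0 = U ∧ (∀ n, W n ∈ 𝓝 1) ∧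
      ∀ n, W (n + 1) * W (n + 1) * W (n + 1) ⊆ W n := by
  choose! f hf hfV using fun V (hV : V ∈ 𝓝 (1 : M)) => exists_nhds_one_mul_mul_subset hV
  have hW : ∀ n, f^[n] U ∈ 𝓝 1 := by
    intro n
    induction n with
    | zero => exact hU
    | succ n ih => rw [iterate_succ_apply']; exact hf _ ih
  refine ⟨fun n => f^[n] U, rfl, hW, fun n => ?_⟩
  simp only [iterate_succ_apply']
  exact hfV _ (hW n)

end Monoid

theorem SstarM_inter_inv_subset {G : Type*} [Group G] {U : Set G} (h1 : (1 : G) ∈ U) :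
    SstarM (U ∩ U⁻¹) ⊆ U := by
  rw [SstarM, Set.inter_inv, inv_inv]
  exact Set.union_subset (Set.union_subset Set.inter_subset_left (Set.singleton_subset_iff.2 h1))
    Set.inter_subset_right

theorem stmt11 {G : Type*} [Group G] (t : TopologicalSpace G)
    (ht : @IsTopologicalGroup G t _) (S : Set G) (hS : S ∈ @nhds G t 1) :
    ∃ Sq : ℚ → Set G, (∀ q : ℚ, Sq q ∈ @nhds G t 1) ∧ UQ Sq ⊆ S := by
  obtain ⟨W, rfl, hW, hW3⟩ := exists_seq_nhds_one_mul_mul_subset hS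
  have h1 : ∀ n, (1 : G) ∈ W n := fun n => mem_of_mem_nhds (hW n)
  let code : ℚ → ℕ := fun q => Encodable.encode q + 1
  refine ⟨fun q => W (code q) ∩ (W (code q))⁻¹,
    fun q => inter_mem (hW _) (inv_mem_nhds_one G (hW _)), ?_⟩
  simp only [UQ, Set.iUnion_subset_iff]
  intro n q hq
  have hcode : Injective code := fun a b h => Encodable.encode_injective (Nat.succ_injective h)
  calc (List.ofFn fun i => SstarM (W (code (q i)) ∩ (W (code (q i)))⁻¹)).prod
      = ((List.ofFn q).map fun r => SstarM (W (code r) ∩ (W (code r))⁻¹)).prod := by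
        rw [List.map_ofFn]; rfl
    _ ⊆ (((List.ofFn q).map code).map W).prod := by
        refine List.Forall₂.prod_le_prod' ?_
        rw [List.map_map, List.forall₂_map_left_iff, List.forall₂_map_right_iff,
          List.forall₂_same]
        exact fun r _ => SstarM_inter_inv_subset (h1 _)
    _ ⊆ W 0 := list_prod_map_subset_of_nodup h1 hW3 _
        ((List.nodup_ofFn.2 hq.injective).map hcode) (by simp [code])
end

section
/- Let G be a group and F a downward directed family of nonempty subsets of G. Let F^G denote the set of all subsets of G of the form ⋃_{g∈G} g S_g g⁻¹, where (S_g)_{g∈G} ranges over all G-tuples of members of F. Then F^G is a downward directed family of nonempty subsets of G, F^G is invariant under conjugation by elements of G (i.e., for every U ∈ F^G and g ∈ G, gUg⁻¹ ∈ F^G), and for every group topology T on G, the family F^G converges to e under T if and only if F converges to e under T. -/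
open Pointwise

/-- `F` is downward directed. -/
def DownDirectedM {G : Type*} [Group G] (F : Set (Set G)) : Prop :=
  ∀ S₁ ∈ F, ∀ S₂ ∈ F, ∃ S₃ ∈ F, S₃ ⊆ S₁ ∩ S₂

/-- The conjugate `g S g⁻¹` of a subset `S`. -/
def conjSet {G : Type*} [Group G] (g : G) (S : Set G) : Set G :=
  (fun x => g * x * g⁻¹) '' S

/-- `F^G`: the set of all subsets of `G` of the form `⋃_{g ∈ G} g S_g g⁻¹`,
for `G`-tuples `(S_g)_{g ∈ G}` of members of `F`. -/
def FconjG {G : Type*} [Group G] (F : Set (Set G)) : Set (Set G) :=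
  {U | ∃ S : G → Set G, (∀ g : G, S g ∈ F) ∧ U = ⋃ g : G, conjSet g (S g)}

/-!
Every member of `F^G` contains its `g = 1` term, a member of `F`; this gives nonemptiness and
one direction of the convergence statement. Conversely, if `F` converges to `e` and `V` is a
neighbourhood of `e`, continuity of conjugation yields for each `g` some `S_g ∈ F` with
`g S_g g⁻¹ ⊆ V`, and then `⋃_g g S_g g⁻¹ ⊆ V`. Directedness is obtained coordinatewise, and
conjugating by `g` only reindexes the union.
-/

open Topology

section Group

variable {G : Type*} [Group G]

lemma conjSet_one (S : Set G) : conjSet 1 S = S := by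
  simp [conjSet]

lemma conjSet_mono (g : G) {S T : Set G} (h : S ⊆ T) : conjSet g S ⊆ conjSet g T :=
  Set.image_mono h

lemma conjSet_conjSet (g h : G) (S : Set G) :
    conjSet g (conjSet h S) = conjSet (g * h) S := by
  simp only [conjSet, ← Set.image_comp]
  exact Set.image_congr' fun x => by simp [mul_assoc]

lemma conjSet_iUnion {ι : Sort*} (g : G) (S : ι → Set G) :
    conjSet g (⋃ i, S i) = ⋃ i, conjSet g (S i) :=
  Set.image_iUnion

variable {F : Set (Set G)} {U : Set G}

lemma iUnion_conjSet_mem_FconjG {S : G → Set G} (hS : ∀ g, S g ∈ F) :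
    ⋃ g, conjSet g (S g) ∈ FconjG F :=
  ⟨S, hS, rfl⟩

lemma exists_mem_subset_of_mem_FconjG (hU : U ∈ FconjG F) : ∃ S ∈ F, S ⊆ U := by
  obtain ⟨S, hS, rfl⟩ := hU
  exact ⟨S 1, hS 1, by simpa only [conjSet_one] using Set.subset_iUnion (fun g => conjSet g (S g)) 1⟩

lemma nonempty_of_mem_FconjG (hne : ∀ S ∈ F, S.Nonempty) (hU : U ∈ FconjG F) : U.Nonempty := by
  obtain ⟨S, hS, hSU⟩ := exists_mem_subset_of_mem_FconjG hU
  exact (hne S hS).mono hSU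

lemma downDirectedM_FconjG (hdir : DownDirectedM F) : DownDirectedM (FconjG F) := by
  rintro _ ⟨S₁, hS₁, rfl⟩ _ ⟨S₂, hS₂, rfl⟩
  choose S₃ hS₃ hsub using fun g => hdir (S₁ g) (hS₁ g) (S₂ g) (hS₂ g)
  refine ⟨_, iUnion_conjSet_mem_FconjG hS₃, Set.subset_inter ?_ ?_⟩
  · exact Set.iUnion_mono fun g => conjSet_mono g ((hsub g).trans Set.inter_subset_left)
  · exact Set.iUnion_mono fun g => conjSet_mono g ((hsub g).trans Set.inter_subset_right)

lemma conjSet_mem_FconjG (hU : U ∈ FconjG F) (g : G) : conjSet g U ∈ FconjG F := by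
  obtain ⟨S, hS, rfl⟩ := hU
  have hreindex : ⋃ h, conjSet (g * h) (S h) = ⋃ k, conjSet k (S (g⁻¹ * k)) := by
    simpa using (Equiv.mulLeft g).iSup_comp (g := fun k => conjSet k (S (g⁻¹ * k)))
  rw [conjSet_iUnion]
  simp only [conjSet_conjSet, hreindex]
  exact iUnion_conjSet_mem_FconjG fun k => hS _

section Topology

variable [TopologicalSpace G] [ContinuousMul G]

lemma exists_conjSet_subset_of_forall_nhds (hF : ∀ V ∈ 𝓝 (1 : G), ∃ S ∈ F, S ⊆ V) (g : G)
    {V : Set G} (hV : V ∈ 𝓝 (1 : G)) : ∃ S ∈ F, conjSet g S ⊆ V := by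
  have hconj : Continuous fun x : G => g * x * g⁻¹ := by fun_prop
  have hpre : (fun x : G => g * x * g⁻¹) ⁻¹' V ∈ 𝓝 (1 : G) :=
    hconj.continuousAt.preimage_mem_nhds (by simpa using hV)
  obtain ⟨S, hSF, hSV⟩ := hF _ hpre
  exact ⟨S, hSF, Set.image_subset_iff.2 hSV⟩

lemma forall_nhds_exists_FconjG_iff :
    (∀ V ∈ 𝓝 (1 : G), ∃ S ∈ FconjG F, S ⊆ V) ↔ (∀ V ∈ 𝓝 (1 : G), ∃ S ∈ F, S ⊆ V) := by
  refine ⟨fun hF V hV => ?_, fun hF V hV => ?_⟩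
  · obtain ⟨U, hU, hUV⟩ := hF V hV
    obtain ⟨S, hS, hSU⟩ := exists_mem_subset_of_mem_FconjG hU
    exact ⟨S, hS, hSU.trans hUV⟩
  · choose S hSF hSV using fun g => exists_conjSet_subset_of_forall_nhds hF g hV
    exact ⟨_, iUnion_conjSet_mem_FconjG hSF, Set.iUnion_subset hSV⟩

end Topology

end Group

theorem stmt12 {G : Type*} [Group G] (F : Set (Set G))
    (hdir : DownDirectedM F) (hne : ∀ S ∈ F, S.Nonempty) :
    DownDirectedM (FconjG F) ∧
    (∀ U ∈ FconjG F, U.Nonempty) ∧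
    (∀ U ∈ FconjG F, ∀ g : G, conjSet g U ∈ FconjG F) ∧
    (∀ t : TopologicalSpace G, @IsTopologicalGroup G t _ →
      ((∀ V ∈ @nhds G t 1, ∃ S ∈ FconjG F, S ⊆ V) ↔
        (∀ V ∈ @nhds G t 1, ∃ S ∈ F, S ⊆ V))) :=
  ⟨downDirectedM_FconjG hdir, fun _ => nonempty_of_mem_FconjG hne,
    fun _ => conjSet_mem_FconjG, fun _ _ => forall_nhds_exists_FconjG_iff⟩
end

section
/- Let G be a group and F a self-indulgent downward directed family of subsets of G which is closed under conjugation by members of G and satisfies: for every g ∈ G with g ≠ e and every n ≥ 1 there exists S ∈ F with g ∉ (S*)ⁿ. Let g ∈ G, and suppose that for some n ≥ 0 and 0 ≤ m ≤ n, S₀, …, S_{m−1}, S_{m+1}, …, S_n are members of F such that g ∉ S₀* ⋯ S_{m−1}* · S_{m+1}* ⋯ S_n*. Then there exists S_m ∈ F such that g ∉ S₀* ⋯ S_{m−1}* · S_m* · S_{m+1}* ⋯ S_n*. -/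
/-!
If the conclusion fails, then for every small `T ∈ F` the element `g` factors as
`y₀(T) ⋯ yₙ(T)` with `yₘ(T) ∈ T*` and `yᵢ(T) ∈ Sᵢ*` otherwise. Applying self-indulgence to one
coordinate after the other, along ever smaller cofinal subfamilies, yields strong limits
`cᵢ ∈ Sᵢ*`. Closure under conjugation lets the errors `yᵢ cᵢ⁻¹` be pulled to the front, so
`g (c₀ ⋯ cₙ)⁻¹` lies in `(U*)ⁿ⁺¹` for every `U ∈ F`, which forces `g = c₀ ⋯ cₙ`. Likewise
`cₘ⁻¹ = yₘ⁻¹ · yₘ cₘ⁻¹ ∈ (U*)²` for every `U ∈ F` forces `cₘ = 1`, so that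
`g ∈ S₀* ⋯ Sₘ₋₁* Sₘ₊₁* ⋯ Sₙ*`.
-/

open Pointwise

/-- `F'` is a downward cofinal subset of `F` (ordered by inclusion). -/
def DownCofinalM {G : Type*} [Group G] (F' F : Set (Set G)) : Prop :=
  F' ⊆ F ∧ ∀ S ∈ F, ∃ T ∈ F', T ⊆ S

/-- The family `(x T)_{T ∈ F''}`, indexed by `F''` ordered (downward) by inclusion,
converges strongly to `a` with respect to `F`. -/
def ConvStrongM {G : Type*} [Group G] (F F'' : Set (Set G)) (x : Set G → G)
    (a : G) : Prop :=
  ∀ S ∈ F, ∃ T ∈ F'', ∀ T' ∈ F'', T' ⊆ T → x T' * a⁻¹ ∈ SstarM S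

/-- `F` is self-indulgent. -/
def SelfIndulgentM {G : Type*} [Group G] (F : Set (Set G)) : Prop :=
  ∀ S ∈ F, ∀ F' : Set (Set G), DownCofinalM F' F →
    ∀ x : Set G → G, (∀ T ∈ F', x T ∈ SstarM S) →
      ∃ a ∈ SstarM S, ∃ F'' : Set (Set G), DownCofinalM F'' F' ∧ ConvStrongM F F'' x a

section
variable {G : Type*} [Group G]

lemma one_mem_sstarM (S : Set G) : (1 : G) ∈ SstarM S := Or.inl (Or.inr rfl)

lemma sstarM_mono {S T : Set G} (h : S ⊆ T) : SstarM S ⊆ SstarM T :=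
  Set.union_subset_union (Set.union_subset_union_left _ h) (Set.inv_subset_inv.2 h)

lemma inv_mem_sstarM {S : Set G} {x : G} (h : x ∈ SstarM S) : x⁻¹ ∈ SstarM S := by
  unfold SstarM at *
  aesop

lemma conjSet_sstarM (a : G) (S : Set G) : conjSet a (SstarM S) = SstarM (conjSet a S) := by
  ext x
  simp only [conjSet, SstarM, Set.image_union, Set.image_singleton, Set.mem_union,
    Set.mem_image, Set.mem_inv, Set.mem_singleton_iff]
  constructor
  · rintro ((⟨y, hy, rfl⟩ | rfl) | ⟨y, hy, rfl⟩)
    · exact Or.inl (Or.inl ⟨y, hy, rfl⟩)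
    · exact Or.inl (Or.inr (by group))
    · exact Or.inr ⟨y⁻¹, hy, by group⟩
  · rintro ((⟨y, hy, rfl⟩ | rfl) | ⟨y, hy, hxy⟩)
    · exact Or.inl (Or.inl ⟨y, hy, rfl⟩)
    · exact Or.inl (Or.inr (by group))
    · exact Or.inr ⟨y⁻¹, by simpa using hy, by rw [← inv_inj, ← hxy]; group⟩

lemma conjSet_pow (a : G) (X : Set G) (k : ℕ) : conjSet a (X ^ k) = conjSet a X ^ k := by
  exact Set.image_pow (MulAut.conj a) X k

lemma DownCofinalM.refl (F : Set (Set G)) : DownCofinalM F F :=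
  ⟨subset_rfl, fun S hS => ⟨S, hS, subset_rfl⟩⟩

lemma DownCofinalM.trans {F₁ F₂ F₃ : Set (Set G)} (h₁₂ : DownCofinalM F₁ F₂)
    (h₂₃ : DownCofinalM F₂ F₃) : DownCofinalM F₁ F₃ := by
  refine ⟨h₁₂.1.trans h₂₃.1, fun S hS => ?_⟩
  obtain ⟨T, hT, hTS⟩ := h₂₃.2 S hS
  obtain ⟨T', hT', hT'T⟩ := h₁₂.2 T hT
  exact ⟨T', hT', hT'T.trans hTS⟩

lemma DownCofinalM.downDirectedM {F' F : Set (Set G)} (h : DownCofinalM F' F)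
    (hdir : DownDirectedM F) : DownDirectedM F' := by
  intro S₁ hS₁ S₂ hS₂
  obtain ⟨V, hV, hVS⟩ := hdir S₁ (h.1 hS₁) S₂ (h.1 hS₂)
  obtain ⟨T, hT, hTV⟩ := h.2 V hV
  exact ⟨T, hT, hTV.trans hVS⟩

lemma downCofinalM_setOf_subset {F : Set (Set G)} (hdir : DownDirectedM F) {S₀ : Set G}
    (hS₀ : S₀ ∈ F) : DownCofinalM {T | T ∈ F ∧ T ⊆ S₀} F := by
  refine ⟨fun T hT => hT.1, fun S hS => ?_⟩
  obtain ⟨T, hT, hTS⟩ := hdir S hS S₀ hS₀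
  exact ⟨T, ⟨hT, hTS.trans Set.inter_subset_right⟩, hTS.trans Set.inter_subset_left⟩

lemma ConvStrongM.of_downCofinalM {F F' F'' : Set (Set G)} {x : Set G → G} {a : G}
    (h : ConvStrongM F F' x a) (hF'' : DownCofinalM F'' F') : ConvStrongM F F'' x a := by
  intro S hS
  obtain ⟨T, hT, hTS⟩ := h S hS
  obtain ⟨T'', hT'', hT''T⟩ := hF''.2 T hT
  exact ⟨T'', hT'', fun T' hT' hT'T'' => hTS T' (hF''.1 hT') (hT'T''.trans hT''T)⟩

lemma SelfIndulgentM.exists_convStrongM_pi {F : Set (Set G)} (hsi : SelfIndulgentM F) :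
    ∀ {k : ℕ} (U : Fin k → Set G), (∀ i, U i ∈ F) →
    ∀ (F' : Set (Set G)), DownCofinalM F' F →
    ∀ (y : Set G → Fin k → G), (∀ T ∈ F', ∀ i, y T i ∈ SstarM (U i)) →
    ∃ c : Fin k → G, (∀ i, c i ∈ SstarM (U i)) ∧ ∃ F'' : Set (Set G), DownCofinalM F'' F' ∧
      ∀ i, ConvStrongM F F'' (fun T => y T i) (c i) := by
  intro k
  induction k with
  | zero =>
    exact fun _ _ F' _ _ _ => ⟨Fin.elim0, fun i => i.elim0, F', .refl F', fun i => i.elim0⟩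
  | succ k ih =>
    intro U hU F' hF' y hy
    obtain ⟨a, ha, F₁, hF₁, hconv₀⟩ :=
      hsi (U 0) (hU 0) F' hF' (fun T => y T 0) (fun T hT => hy T hT 0)
    obtain ⟨c, hc, F'', hF'', hconv⟩ :=
      ih (fun i => U i.succ) (fun i => hU _) F₁ (hF₁.trans hF')
        (fun T i => y T i.succ) (fun T hT i => hy T (hF₁.1 hT) i.succ)
    refine ⟨Fin.cons a c, Fin.cases ha hc, F'', hF''.trans hF₁,
      Fin.cases (hconv₀.of_downCofinalM hF'') hconv⟩

lemma eq_one_of_forall_mem_pow_sstarM {F : Set (Set G)}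
    (hsep : ∀ g : G, g ≠ 1 → ∀ n : ℕ, 1 ≤ n → ∃ S ∈ F, g ∉ (SstarM S) ^ n)
    {x : G} {k : ℕ} (h : ∀ S ∈ F, x ∈ SstarM S ^ k) : x = 1 := by
  by_contra hx
  obtain ⟨S, hS, hxS⟩ := hsep x hx (k + 1) k.succ_pos
  exact hxS (Set.pow_subset_pow_right (one_mem_sstarM S) k.le_succ (h S hS))

lemma exists_prod_ofFn_mul_inv_mem_pow_sstarM {F F'' : Set (Set G)} (hdir : DownDirectedM F)
    (hconj : ∀ S ∈ F, ∀ g : G, conjSet g S ∈ F) (hF'' : DownCofinalM F'' F) :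
    ∀ {k : ℕ} {y : Set G → Fin k → G} {c : Fin k → G},
      (∀ i, ConvStrongM F F'' (fun T => y T i) (c i)) → ∀ U ∈ F, ∃ T ∈ F'', ∀ T' ∈ F'', T' ⊆ T →
        (List.ofFn (y T')).prod * ((List.ofFn c).prod)⁻¹ ∈ SstarM U ^ k := by
  intro k
  induction k with
  | zero =>
    intro y c _ U hU
    obtain ⟨T, hT, -⟩ := hF''.2 U hU
    exact ⟨T, hT, fun _ _ _ => by simp⟩
  | succ k ih =>
    intro y c hconv U hU
    obtain ⟨T₀, hT₀, h₀⟩ := hconv 0 U hU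
    obtain ⟨T₁, hT₁, h₁⟩ := ih (fun i => hconv i.succ) _ (hconj U hU (c 0)⁻¹)
    obtain ⟨T, hT, hTT₀T₁⟩ := hF''.downDirectedM hdir T₀ hT₀ T₁ hT₁
    refine ⟨T, hT, fun T' hT' hT'T => ?_⟩
    have e₀ := h₀ T' hT' (hT'T.trans (hTT₀T₁.trans Set.inter_subset_left))
    have e₁ := h₁ T' hT' (hT'T.trans (hTT₀T₁.trans Set.inter_subset_right))
    rw [← conjSet_sstarM, ← conjSet_pow] at e₁
    obtain ⟨z, hz, hz_eq⟩ := e₁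
    rw [List.ofFn_succ, List.ofFn_succ, List.prod_cons, List.prod_cons, pow_succ']
    set R := (List.ofFn fun i => y T' i.succ).prod
    set C := (List.ofFn fun i => c i.succ).prod
    have hz' : z = c 0 * (R * C⁻¹) * (c 0)⁻¹ := by
      rw [← hz_eq]
      group
    -- conjugating the tail by `c 0` moves the error term `y T' 0 * (c 0)⁻¹` to the front
    have key : y T' 0 * R * (c 0 * C)⁻¹ = y T' 0 * (c 0)⁻¹ * z := by
      rw [hz']
      group
    rw [key]
    exact Set.mul_mem_mul e₀ hz

lemma eq_prod_ofFn_of_convStrongM {F : Set (Set G)}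
    (hsep : ∀ g : G, g ≠ 1 → ∀ n : ℕ, 1 ≤ n → ∃ S ∈ F, g ∉ (SstarM S) ^ n)
    (hdir : DownDirectedM F) (hconj : ∀ S ∈ F, ∀ g : G, conjSet g S ∈ F)
    {F'' : Set (Set G)} (hF'' : DownCofinalM F'' F)
    {k : ℕ} {y : Set G → Fin k → G} {c : Fin k → G} {g : G}
    (hy : ∀ T ∈ F'', (List.ofFn (y T)).prod = g)
    (hconv : ∀ i, ConvStrongM F F'' (fun T => y T i) (c i)) : g = (List.ofFn c).prod := by
  rw [← mul_inv_eq_one]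
  refine eq_one_of_forall_mem_pow_sstarM hsep (k := k) fun U hU => ?_
  obtain ⟨T, hT, hTU⟩ := exists_prod_ofFn_mul_inv_mem_pow_sstarM hdir hconj hF'' hconv U hU
  simpa only [hy T hT] using hTU T hT subset_rfl

lemma eq_one_of_convStrongM_of_mem_sstarM {F : Set (Set G)}
    (hsep : ∀ g : G, g ≠ 1 → ∀ n : ℕ, 1 ≤ n → ∃ S ∈ F, g ∉ (SstarM S) ^ n)
    (hdir : DownDirectedM F) {F'' : Set (Set G)} (hF'' : DownCofinalM F'' F) {x : Set G → G} {c : G}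
    (hx : ∀ T ∈ F'', x T ∈ SstarM T)
    (hconv : ConvStrongM F F'' x c) : c = 1 := by
  rw [← inv_eq_one]
  refine eq_one_of_forall_mem_pow_sstarM hsep (k := 2) fun U hU => ?_
  obtain ⟨T, hT, hTU⟩ := hconv U hU
  obtain ⟨V, hV, hVTU⟩ := hdir T (hF''.1 hT) U hU
  obtain ⟨T', hT', hT'V⟩ := hF''.2 V hV
  have hxU : x T' ∈ SstarM U :=
    sstarM_mono (hT'V.trans (hVTU.trans Set.inter_subset_right)) (hx T' hT')
  have hxc := hTU T' hT' (hT'V.trans (hVTU.trans Set.inter_subset_left))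
  rw [show c⁻¹ = (x T')⁻¹ * (x T' * c⁻¹) by group, sq]
  exact Set.mul_mem_mul (inv_mem_sstarM hxU) hxc

end

lemma List.eraseIdx_ofFn {α : Type*} {n : ℕ} (f : Fin (n + 1) → α) (m : Fin (n + 1)) :
    (List.ofFn f).eraseIdx m = List.ofFn fun i => f (m.succAbove i) := by
  refine List.ext_getElem ?_ fun i _ h₂ => ?_
  · simp [List.length_eraseIdx, m.isLt]
  simp only [List.length_ofFn] at h₂
  rw [List.getElem_ofFn, List.getElem_eraseIdx]
  split_ifs with hi
  · simp only [List.getElem_ofFn]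
    rw [Fin.succAbove_of_castSucc_lt m ⟨i, h₂⟩ (by simpa [Fin.lt_def] using hi)]
    rfl
  · simp only [List.getElem_ofFn]
    rw [Fin.succAbove_of_le_castSucc m ⟨i, h₂⟩ (by simp [Fin.le_def]; omega)]
    rfl

lemma prod_ofFn_mem_prod_eraseIdx {M : Type*} [Monoid M] {n : ℕ} {x : Fin (n + 1) → M}
    {s : Fin (n + 1) → Set M} {m : Fin (n + 1)} (hx : ∀ i, i ≠ m → x i ∈ s i) (hm : x m = 1) :
    (List.ofFn x).prod ∈ ((List.ofFn s).eraseIdx m).prod := by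
  have hlen : (m : ℕ) < (List.ofFn x).length := by simp only [List.length_ofFn, m.isLt]
  have hxm : (List.ofFn x)[(m : ℕ)] = 1 := by simp only [List.getElem_ofFn, Fin.eta, hm]
  have hprod : (List.ofFn x).prod = (List.ofFn fun i => x (m.succAbove i)).prod := by
    rw [← List.eraseIdx_ofFn,
      ← List.mul_prod_eraseIdx hlen (hxm ▸ fun a _ => Commute.one_left a), hxm, one_mul]
  rw [hprod, List.eraseIdx_ofFn, Set.mem_prod_list_ofFn]
  exact ⟨fun i => ⟨_, hx _ (Fin.succAbove_ne m i)⟩, rfl⟩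

theorem stmt16 {G : Type*} [Group G] (F : Set (Set G))
    (hdir : DownDirectedM F) (hsi : SelfIndulgentM F)
    (hconj : ∀ S ∈ F, ∀ g : G, conjSet g S ∈ F)
    (hcond : ∀ g : G, g ≠ 1 → ∀ n : ℕ, 1 ≤ n → ∃ S ∈ F, g ∉ (SstarM S) ^ n)
    (g : G) (n : ℕ) (m : Fin (n + 1)) (S : Fin (n + 1) → Set G)
    (hS : ∀ i : Fin (n + 1), i ≠ m → S i ∈ F)
    (hgnot : g ∉ ((List.ofFn fun i => SstarM (S i)).eraseIdx (m : ℕ)).prod) :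
    ∃ Sm ∈ F,
      g ∉ (List.ofFn fun i => SstarM (Function.update S m Sm i)).prod := by
  have hg : g ≠ 1 := by
    rintro rfl
    refine hgnot ?_
    simpa using prod_ofFn_mem_prod_eraseIdx (x := fun _ => (1 : G)) (m := m)
      (fun i _ => one_mem_sstarM (S i)) rfl
  obtain ⟨S₀, hS₀, -⟩ := hcond g hg 1 le_rfl
  -- restricting to `T ⊆ S₀` puts every `m`-th factor into the single set `S₀*`
  have hF₀ := downCofinalM_setOf_subset hdir hS₀
  by_contra! hcon
  have hdec : ∀ T ∈ F, ∃ y : Fin (n + 1) → G,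
      (∀ i, y i ∈ SstarM (Function.update S m T i)) ∧ (List.ofFn y).prod = g := by
    intro T hT
    obtain ⟨f, hf⟩ := Set.mem_prod_list_ofFn.1 (hcon T hT)
    exact ⟨fun i => f i, fun i => (f i).2, hf⟩
  choose! y hy hyg using hdec
  have hyS₀ : ∀ T ∈ {T | T ∈ F ∧ T ⊆ S₀}, ∀ i, y T i ∈ SstarM (Function.update S m S₀ i) := by
    rintro T ⟨hT, hTS₀⟩ i
    refine sstarM_mono ?_ (hy T hT i)
    rcases eq_or_ne i m with rfl | hi
    · simpa using hTS₀
    · simp [hi]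
  have hUF : ∀ i, Function.update S m S₀ i ∈ F := by
    intro i
    rcases eq_or_ne i m with rfl | hi
    · simpa using hS₀
    · simpa [hi] using hS i hi
  obtain ⟨c, hc, F'', hF''₀, hconv⟩ := hsi.exists_convStrongM_pi _ hUF _ hF₀ y hyS₀
  have hF'' := hF''₀.trans hF₀
  have hgc : g = (List.ofFn c).prod :=
    eq_prod_ofFn_of_convStrongM hcond hdir hconj hF'' (fun T hT => hyg T (hF''.1 hT)) hconv
  have hcm : c m = 1 :=
    eq_one_of_convStrongM_of_mem_sstarM hcond hdir hF''
      (fun T hT => by simpa using hy T (hF''.1 hT) m) (hconv m)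
  refine hgnot (hgc ▸ prod_ofFn_mem_prod_eraseIdx (fun i hi => ?_) hcm)
  simpa [hi] using hc i
end

section
/- Let G be the free group on two generators x and y, and define a sequence (f_n)_{n∈ℕ} in G by f₀ = x, f₁ = y, and f_{n+1} = f_{n−1} f_n for n ≥ 1. Then there do not exist a Hausdorff group topology on G and an element c ∈ G such that the sequence (f_n) converges to c in that topology. -/
/-!
Along the recurrence `f (n + 2) = f n * f (n + 1)` the commutator `⁅f n, f (n + 1)⁆` is inverted
at each step, so `⁅f (2n), f (2n + 1)⁆ = ⁅x, y⁆` for all `n`. If `f n → c` in a group topology,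
these commutators tend to `⁅c, c⁆ = 1`, and by the Hausdorff property `⁅x, y⁆ = 1`, which fails
in the free group.
-/

open Filter Topology
open scoped commutatorElement

section Recurrence

variable {G : Type*} [Group G] {f : ℕ → G}

theorem commutatorElement_succ_of_recurrence (hrec : ∀ n, f (n + 2) = f n * f (n + 1)) (n : ℕ) :
    ⁅f (n + 1), f (n + 2)⁆ = ⁅f n, f (n + 1)⁆⁻¹ := by
  simp only [hrec, commutatorElement_def]
  group

theorem commutatorElement_two_mul_of_recurrence (hrec : ∀ n, f (n + 2) = f n * f (n + 1))
    (n : ℕ) : ⁅f (2 * n), f (2 * n + 1)⁆ = ⁅f 0, f 1⁆ := by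
  induction n with
  | zero => rfl
  | succ k ih =>
    rw [show 2 * (k + 1) = 2 * k + 1 + 1 by ring, commutatorElement_succ_of_recurrence hrec,
      commutatorElement_succ_of_recurrence hrec, inv_inv, ih]

end Recurrence

theorem eq_one_of_tendsto_commutatorElement {G α : Type*} [Group G] [TopologicalSpace G]
    [IsTopologicalGroup G] [T2Space G] {l : Filter α} [l.NeBot] {u v : α → G} {c g : G}
    (hu : Tendsto u l (𝓝 c)) (hv : Tendsto v l (𝓝 c)) (hg : ∀ a, ⁅u a, v a⁆ = g) : g = 1 := by
  have hlim : Tendsto (fun a => ⁅u a, v a⁆) l (𝓝 ⁅c, c⁆) := by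
    simp only [commutatorElement_def]
    exact ((hu.mul hv).mul hu.inv).mul hv.inv
  rw [commutatorElement_self, funext hg] at hlim
  exact tendsto_nhds_unique tendsto_const_nhds hlim

theorem FreeGroup.commutatorElement_of_of_ne_one {α : Type*} [DecidableEq α] {a b : α}
    (hab : a ≠ b) : ⁅FreeGroup.of a, FreeGroup.of b⁆ ≠ 1 := by
  intro h
  -- In `S₃`, `⁅(0 1), (1 2)⁆` is a 3-cycle.
  have hperm := congrArg (FreeGroup.lift fun x : α =>
    if x = a then (Equiv.swap 0 1 : Equiv.Perm (Fin 3)) else Equiv.swap 1 2) h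
  rw [map_commutatorElement, _root_.map_one, FreeGroup.lift_apply_of, FreeGroup.lift_apply_of,
    if_pos rfl, if_neg hab.symm] at hperm
  revert hperm
  decide

theorem stmt18 (f : ℕ → FreeGroup Bool)
    (hf0 : f 0 = FreeGroup.of true) (hf1 : f 1 = FreeGroup.of false)
    (hrec : ∀ n : ℕ, f (n + 2) = f n * f (n + 1)) :
    ¬ ∃ (t : TopologicalSpace (FreeGroup Bool)) (_ : @IsTopologicalGroup (FreeGroup Bool) t _)
        (_ : @T2Space (FreeGroup Bool) t) (c : FreeGroup Bool),
        Filter.Tendsto f Filter.atTop (@nhds (FreeGroup Bool) t c) := by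
  rintro ⟨t, _, _, c, hc⟩
  have h2n : Tendsto (fun n : ℕ => 2 * n) atTop atTop :=
    tendsto_id.const_mul_atTop' two_pos
  have h2n1 : Tendsto (fun n : ℕ => 2 * n + 1) atTop atTop :=
    (tendsto_add_atTop_nat 1).comp h2n
  have hcomm : ⁅f 0, f 1⁆ = 1 :=
    eq_one_of_tendsto_commutatorElement (hc.comp h2n) (hc.comp h2n1)
      (commutatorElement_two_mul_of_recurrence hrec)
  rw [hf0, hf1] at hcomm
  exact FreeGroup.commutatorElement_of_of_ne_one (by decide) hcomm
end
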